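/- arXiv:math/9607210 — 2 statements merged into one kernel-verified Lean document; each statement's English description precedes it below -/
import Mathlib

section
/- For any r > 0 and any closed, convex, origin-symmetric set A ⊆ ℝⁿ, μₙ(A ∩ r·B₂ⁿ) ≥ μₙ(A)·μₙ(r·B₂ⁿ). -/
open MeasureTheory Real Pointwise
noncomputable def stdGaussian (n : ℕ) : Measure (EuclideanSpace ℝ (Fin n)) :=
  volume.withDensity fun x => ENNReal.ofReal ((2 * π) ^ (-(n : ℝ) / 2) * Real.exp (-‖x‖ ^ 2 / 2))

/-!
In polar coordinates `x = s • θ`, a measure `ν` with radial density with respect to a Haar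
measure satisfies `ν S = ∫ σ {θ | s • θ ∈ S} dρ(s)` for the sphere measure `σ` and a radial
measure `ρ`. For `A` star-shaped about `0` the slice measure `f s = σ {θ | s • θ ∈ A}` is
nonincreasing in `s`, and the slices of the ball of radius `r` are the whole sphere for `s ≤ r`
and empty beyond. The inequality is then Chebyshev's correlation inequality for the two
nonincreasing functions `f` and `1_{s ≤ r}`, which only uses `f ≥ f r` on `{s ≤ r}` and
`f ≤ f r` off it.
-/

open Measure Set Metric
open scoped ENNReal

theorem lintegral_mul_measure_le_setLIntegral_mul_measure_univ {α : Type*} [MeasurableSpace α]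
    (ρ : Measure α) {f : α → ℝ≥0∞} {K : Set α} (hK : MeasurableSet K) (c : ℝ≥0∞)
    (hf_ge : ∀ x ∈ K, c ≤ f x) (hf_le : ∀ x ∈ Kᶜ, f x ≤ c) :
    (∫⁻ x, f x ∂ρ) * ρ K ≤ (∫⁻ x in K, f x ∂ρ) * ρ univ := by
  have h_in : c * ρ K ≤ ∫⁻ x in K, f x ∂ρ := by
    rw [← setLIntegral_const]
    exact setLIntegral_mono' hK hf_ge
  have h_out : ∫⁻ x in Kᶜ, f x ∂ρ ≤ c * ρ Kᶜ := by
    rw [← setLIntegral_const]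
    exact setLIntegral_mono' hK.compl hf_le
  calc (∫⁻ x, f x ∂ρ) * ρ K
      = (∫⁻ x in K, f x ∂ρ) * ρ K + (∫⁻ x in Kᶜ, f x ∂ρ) * ρ K := by
        rw [← lintegral_add_compl f hK, add_mul]
    _ ≤ (∫⁻ x in K, f x ∂ρ) * ρ K + c * ρ K * ρ Kᶜ := by
        rw [mul_right_comm]
        gcongr
    _ ≤ (∫⁻ x in K, f x ∂ρ) * ρ K + (∫⁻ x in K, f x ∂ρ) * ρ Kᶜ := by gcongr
    _ = (∫⁻ x in K, f x ∂ρ) * ρ univ := by rw [← mul_add, measure_add_measure_compl hK]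

theorem Convex.zero_mem_of_neg_mem {𝕜 E : Type*} [Field 𝕜] [LinearOrder 𝕜] [IsStrictOrderedRing 𝕜]
    [AddCommGroup E] [Module 𝕜 E] {A : Set E} (hA : Convex 𝕜 A) {a : E} (ha : a ∈ A)
    (hneg : ∀ x ∈ A, -x ∈ A) : (0 : E) ∈ A := by
  have h_half : (0 : 𝕜) ≤ 1 / 2 := by positivity
  simpa using hA ha (hneg a ha) h_half h_half (add_halves 1)

section SphereSlice

variable {E : Type*} [NormedAddCommGroup E] [NormedSpace ℝ E]

def sphereSlice (S : Set E) (s : ℝ) : Set (sphere (0 : E) 1) :=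
  {θ | s • (θ : E) ∈ S}

theorem StarConvex.sphereSlice_antitoneOn {A : Set E} (hA : StarConvex ℝ 0 A) :
    AntitoneOn (sphereSlice A) (Ioi 0) := by
  intro s hs t ht hst θ hθ
  have hrescale : s • (θ : E) = (s / t) • t • (θ : E) := by
    rw [smul_smul, div_mul_cancel₀ _ (ne_of_gt ht)]
  change s • (θ : E) ∈ A
  rw [hrescale]
  exact hA.smul_mem hθ (div_nonneg (le_of_lt hs) (le_of_lt ht))
    (div_le_one_of_le₀ hst (le_of_lt ht))

@[simp]
theorem sphereSlice_univ (s : ℝ) : sphereSlice (univ : Set E) s = univ :=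
  rfl

theorem norm_smul_sphere {s : ℝ} (hs : 0 ≤ s) (θ : sphere (0 : E) 1) : ‖s • (θ : E)‖ = s := by
  simp [norm_smul, abs_of_nonneg hs]

theorem sphereSlice_inter_closedBall (S : Set E) {s : ℝ} (hs : 0 ≤ s) (r : ℝ) :
    sphereSlice (S ∩ closedBall 0 r) s = if s ≤ r then sphereSlice S s else ∅ := by
  ext θ
  split_ifs with hsr <;> simp [sphereSlice, norm_smul_sphere hs, hsr]

end SphereSlice

section Polar

variable {E : Type*} [NormedAddCommGroup E] [NormedSpace ℝ E] [FiniteDimensional ℝ E]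
  [MeasurableSpace E] [BorelSpace E] (μ : Measure E) [μ.IsAddHaarMeasure]

theorem lintegral_eq_lintegral_toSphere [Nontrivial E] {F : E → ℝ≥0∞} (hF : Measurable F) :
    ∫⁻ x, F x ∂μ = ∫⁻ s : Ioi (0 : ℝ), ∫⁻ θ, F ((s : ℝ) • (θ : E)) ∂μ.toSphere
      ∂volumeIoiPow (Module.finrank ℝ E - 1) := by
  calc ∫⁻ x, F x ∂μ = ∫⁻ x : ({0}ᶜ : Set E), F x ∂μ.comap (↑) := by
        rw [lintegral_subtype_comap (measurableSet_singleton _).compl, restrict_compl_singleton]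
    _ = ∫⁻ p, F ((homeomorphUnitSphereProd E).symm p)
          ∂μ.toSphere.prod (volumeIoiPow (Module.finrank ℝ E - 1)) := by
        rw [← μ.measurePreserving_homeomorphUnitSphereProd.lintegral_comp_emb
          (Homeomorph.measurableEmbedding _)]
        simp
    _ = _ := lintegral_prod_symm _ (hF.comp (by fun_prop)).aemeasurable

variable (w : ℝ → ℝ≥0∞) (hw : Measurable w) (hw_fin : ∀ t, w t ≠ ∞)
include hw hw_fin

theorem withDensity_norm_apply [Nontrivial E] {S : Set E} (hS : MeasurableSet S) :
    μ.withDensity (fun x => w ‖x‖) S = ∫⁻ s : Ioi (0 : ℝ), μ.toSphere (sphereSlice S s)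
      ∂(volumeIoiPow (Module.finrank ℝ E - 1)).withDensity fun s => w s := by
  rw [withDensity_apply _ hS, ← lintegral_indicator hS,
    lintegral_eq_lintegral_toSphere μ
      ((hw.comp measurable_norm).indicator (f := fun x => w ‖x‖) hS),
    lintegral_withDensity_eq_lintegral_mul_non_measurable _
      (f := fun s : Ioi (0 : ℝ) => w s) (hw.comp measurable_subtype_coe)
      (ae_of_all _ fun s => (hw_fin s).lt_top)]
  refine lintegral_congr fun s => ?_
  have hslice : MeasurableSet (sphereSlice S s) :=
    hS.preimage (by fun_prop : Continuous fun θ : sphere (0 : E) 1 => (s : ℝ) • (θ : E)).measurable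
  calc ∫⁻ θ, S.indicator (fun x => w ‖x‖) ((s : ℝ) • (θ : E)) ∂μ.toSphere
      = ∫⁻ θ, (sphereSlice S s).indicator (fun _ => w s) θ ∂μ.toSphere := by
        refine lintegral_congr fun θ => ?_
        by_cases h : θ ∈ sphereSlice S s
        · rw [indicator_of_mem h, indicator_of_mem (show (s : ℝ) • (θ : E) ∈ S from h),
            norm_smul_sphere (le_of_lt s.2)]
        · rw [indicator_of_notMem h, indicator_of_notMem (show (s : ℝ) • (θ : E) ∉ S from h)]
    _ = w s * μ.toSphere (sphereSlice S s) := lintegral_indicator_const hslice _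

theorem withDensity_norm_inter_closedBall [Nontrivial E] {S : Set E} (hS : MeasurableSet S)
    (r : ℝ) :
    μ.withDensity (fun x => w ‖x‖) (S ∩ closedBall 0 r) =
      ∫⁻ s in {s : Ioi (0 : ℝ) | (s : ℝ) ≤ r}, μ.toSphere (sphereSlice S s)
        ∂(volumeIoiPow (Module.finrank ℝ E - 1)).withDensity fun s => w s := by
  rw [withDensity_norm_apply μ w hw hw_fin (hS.inter measurableSet_closedBall),
    ← lintegral_indicator (measurableSet_le measurable_subtype_coe measurable_const)]
  refine lintegral_congr fun s => ?_
  by_cases hs : (s : ℝ) ≤ r <;> simp [sphereSlice_inter_closedBall S (le_of_lt s.2), hs]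

theorem withDensity_norm_mul_le_of_starConvex {A : Set E} (hA : MeasurableSet A)
    (hA0 : StarConvex ℝ 0 A) {r : ℝ} (hr : 0 < r) :
    μ.withDensity (fun x => w ‖x‖) A * μ.withDensity (fun x => w ‖x‖) (closedBall 0 r) ≤
      μ.withDensity (fun x => w ‖x‖) (A ∩ closedBall 0 r) *
        μ.withDensity (fun x => w ‖x‖) univ := by
  obtain hE | hE := subsingleton_or_nontrivial E
  · have hball : closedBall (0 : E) r = univ :=
      eq_univ_of_forall fun x => by simp [Subsingleton.elim x 0, le_of_lt hr]
    rw [hball, inter_univ]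
  set ν := μ.withDensity fun x => w ‖x‖
  set ρ := (volumeIoiPow (Module.finrank ℝ E - 1)).withDensity fun s => w s
  set K : Set (Ioi (0 : ℝ)) := {s | (s : ℝ) ≤ r}
  set f : Ioi (0 : ℝ) → ℝ≥0∞ := fun s => μ.toSphere (sphereSlice A s)
  have h_A : ν A = ∫⁻ s, f s ∂ρ := withDensity_norm_apply μ w hw hw_fin hA
  have h_inter : ν (A ∩ closedBall 0 r) = ∫⁻ s in K, f s ∂ρ :=
    withDensity_norm_inter_closedBall μ w hw hw_fin hA r
  have h_ball : ν (closedBall 0 r) = μ.toSphere univ * ρ K := by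
    rw [← univ_inter (closedBall 0 r),
      withDensity_norm_inter_closedBall μ w hw hw_fin MeasurableSet.univ]
    simp only [sphereSlice_univ]
    exact setLIntegral_const K _
  have h_total : ν univ = μ.toSphere univ * ρ univ := by
    rw [withDensity_norm_apply μ w hw hw_fin MeasurableSet.univ]
    simp only [sphereSlice_univ]
    exact lintegral_const _
  have h_antitone := hA0.sphereSlice_antitoneOn
  have h_cheb : (∫⁻ s, f s ∂ρ) * ρ K ≤ (∫⁻ s in K, f s ∂ρ) * ρ univ :=
    lintegral_mul_measure_le_setLIntegral_mul_measure_univ ρ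
      (measurableSet_le measurable_subtype_coe measurable_const) (μ.toSphere (sphereSlice A r))
      (fun s hs => measure_mono (h_antitone s.2 hr hs))
      (fun s hs => measure_mono (h_antitone (mem_Ioi.2 hr) s.2 (le_of_lt (not_le.1 hs))))
  rw [h_A, h_ball, h_inter, h_total]
  calc _ = (∫⁻ s, f s ∂ρ) * ρ K * μ.toSphere univ := by ring
    _ ≤ (∫⁻ s in K, f s ∂ρ) * ρ univ * μ.toSphere univ := by gcongr
    _ = _ := by ring

end Polar

theorem integral_exp_neg_sq_norm_div_two (n : ℕ) :
    ∫ x : EuclideanSpace ℝ (Fin n), rexp (-‖x‖ ^ 2 / 2) = (2 * π) ^ ((n : ℝ) / 2) := by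
  have h := GaussianFourier.integral_rexp_neg_mul_sq_norm (V := EuclideanSpace ℝ (Fin n))
    (b := 1 / 2) (by norm_num)
  rw [finrank_euclideanSpace_fin, div_div_eq_mul_div, div_one, mul_comm π] at h
  simpa [neg_div, div_eq_inv_mul] using h

instance isProbabilityMeasure_stdGaussian (n : ℕ) :
    IsProbabilityMeasure (stdGaussian n) := by
  have h_int :
      ∫ x : EuclideanSpace ℝ (Fin n), (2 * π) ^ (-(n : ℝ) / 2) * rexp (-‖x‖ ^ 2 / 2) = 1 := by
    rw [integral_const_mul, integral_exp_neg_sq_norm_div_two, ← rpow_add (by positivity)]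
    simp [neg_div]
  constructor
  rw [stdGaussian, withDensity_apply _ MeasurableSet.univ, restrict_univ,
    ← ofReal_integral_eq_lintegral_ofReal (Integrable.of_integral_ne_zero (by simp [h_int]))
      (ae_of_all _ fun x => by positivity), h_int, ENNReal.ofReal_one]

theorem stmt_7 (n : ℕ) (r : ℝ) (hr : 0 < r) (A : Set (EuclideanSpace ℝ (Fin n)))
    (hAcl : IsClosed A) (hAco : Convex ℝ A) (hAsym : ∀ x ∈ A, -x ∈ A) :
    stdGaussian n (A ∩ Metric.closedBall 0 r) ≥
      stdGaussian n A * stdGaussian n (Metric.closedBall 0 r) := by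
  obtain rfl | ⟨a, ha⟩ := A.eq_empty_or_nonempty
  · simp
  have h_star : StarConvex ℝ 0 A := hAco.starConvex (hAco.zero_mem_of_neg_mem ha hAsym)
  have h : stdGaussian n A * stdGaussian n (closedBall 0 r) ≤
      stdGaussian n (A ∩ closedBall 0 r) * stdGaussian n univ :=
    withDensity_norm_mul_le_of_starConvex volume
      (fun t => ENNReal.ofReal ((2 * π) ^ (-(n : ℝ) / 2) * rexp (-t ^ 2 / 2))) (by fun_prop)
      (fun _ => ENNReal.ofReal_ne_top) hAcl.measurableSet h_star hr
  rwa [measure_univ, mul_one] at h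
end

section
/- If A, B ⊆ ℝⁿ are closed, convex, origin-symmetric sets each of which is 1-unconditional with respect to the standard basis (i.e. (x₁,…,xₙ) ∈ A iff (±x₁,…,±xₙ) ∈ A for all sign choices, and similarly for B), then μₙ(A∩B) ≥ μₙ(A)·μₙ(B). -/
/-!
Write `x = (t, y)` with `t` the first coordinate. For a convex unconditional set `A`, every slice
`A_t = {y | (t, y) ∈ A}` is again convex and unconditional, and `A_t` shrinks as `|t|` grows
(the heights at which a fixed `y` lies in `A` form a symmetric interval). Hence `t ↦ μ(A_t)` and
`t ↦ μ(B_t)` are both non-increasing in `|t|`, so Chebyshev's integral inequality and Fubini give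
`μ(A) μ(B) = ∫ μ(A_t) · ∫ μ(B_t) ≤ ∫ μ(A_t) μ(B_t) ≤ ∫ μ(A_t ∩ B_t) = μ(A ∩ B)`,
the last inequality by induction on the dimension. Only the product structure of `μ` matters,
so the argument is carried out for an arbitrary product of probability measures on `ℝ`.
-/

open MeasureTheory Real Pointwise
open scoped ENNReal
open ProbabilityTheory (gaussianReal gaussianPDF gaussianPDFReal gaussianPDF_def
  gaussianPDFReal_nonneg gaussianReal_of_var_ne_zero measurable_gaussianPDF)

-- The general `mul_add_mul_le_mul_add_mul` needs additive cancellation, which `ℝ≥0∞` lacks.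
theorem ENNReal.mul_add_mul_le_mul_add_mul {a b c d : ℝ≥0∞} (hab : a ≤ b) (hcd : c ≤ d) :
    a * d + b * c ≤ a * c + b * d := by
  obtain ⟨e, rfl⟩ := exists_add_of_le hab
  obtain ⟨h, rfl⟩ := exists_add_of_le hcd
  calc a * (c + h) + (a + e) * c ≤ a * (c + h) + (a + e) * c + e * h := le_self_add
    _ = a * c + (a + e) * (c + h) := by ring

/-- Chebyshev's integral inequality. -/
theorem Monovary.lintegral_mul_lintegral_le {α : Type*} [MeasurableSpace α] {μ : Measure α}
    [IsProbabilityMeasure μ] {f g : α → ℝ≥0∞} (hf : Measurable f) (hg : Measurable g)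
    (hfg : Monovary f g) :
    (∫⁻ x, f x ∂μ) * ∫⁻ x, g x ∂μ ≤ ∫⁻ x, f x * g x ∂μ := by
  have rearrangement : ∀ x y, f x * g y + f y * g x ≤ f x * g x + f y * g y := by
    intro x y
    rcases lt_trichotomy (g x) (g y) with h | h | h
    · exact ENNReal.mul_add_mul_le_mul_add_mul (hfg h) h.le
    · rw [h]
    · rw [add_comm (f x * g y), add_comm (f x * g x)]
      exact ENNReal.mul_add_mul_le_mul_add_mul (hfg h) h.le
  refine (ENNReal.mul_le_mul_iff_right two_ne_zero ENNReal.ofNat_ne_top).1 ?_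
  calc 2 * ((∫⁻ x, f x ∂μ) * ∫⁻ x, g x ∂μ)
      = ∫⁻ p : α × α, f p.1 * g p.2 + g p.1 * f p.2 ∂μ.prod μ := by
        rw [lintegral_add_left (by fun_prop), lintegral_prod_mul hf.aemeasurable hg.aemeasurable,
          lintegral_prod_mul hg.aemeasurable hf.aemeasurable, mul_comm (∫⁻ x, g x ∂μ), two_mul]
    _ ≤ ∫⁻ p : α × α, f p.1 * g p.1 + f p.2 * g p.2 ∂μ.prod μ :=
        lintegral_mono fun p => by rw [mul_comm (g p.1)]; exact rearrangement p.1 p.2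
    _ = 2 * ∫⁻ x, f x * g x ∂μ := by
        rw [lintegral_add_left (by fun_prop),
          measurePreserving_fst.lintegral_comp (f := fun x => f x * g x) (by fun_prop),
          measurePreserving_snd.lintegral_comp (f := fun x => f x * g x) (by fun_prop), two_mul]

theorem MeasureTheory.lintegral_fin_prod_eq_prod {n : ℕ} {E : Type*} [MeasurableSpace E]
    (μ : Fin n → Measure E) [∀ i, SigmaFinite (μ i)] {f : Fin n → E → ℝ≥0∞}
    (hf : ∀ i, Measurable (f i)) :
    ∫⁻ x, ∏ i, f i (x i) ∂Measure.pi μ = ∏ i, ∫⁻ x, f i x ∂μ i := by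
  induction n with
  | zero => simp
  | succ n ih =>
    rw [← (measurePreserving_piFinSuccAbove μ 0).symm.lintegral_comp (by fun_prop)]
    simp_rw [MeasurableEquiv.piFinSuccAbove_symm_apply, Fin.insertNthEquiv,
      Fin.prod_univ_succ, Fin.insertNth_zero, Equiv.coe_fn_mk, Fin.cons_succ,
      Fin.zero_succAbove, cast_eq, Fin.cons_zero]
    rw [lintegral_prod_mul (g := fun y : Fin n → E => ∏ i : Fin n, f i.succ (y i))
      (hf 0).aemeasurable
      (Finset.measurable_prod _ fun i _ => (hf i.succ).comp (measurable_pi_apply i)).aemeasurable,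
      ih _ fun i => hf i.succ]

theorem MeasureTheory.Measure.pi_withDensity {n : ℕ} {E : Type*} [MeasurableSpace E]
    (μ : Fin n → Measure E) [∀ i, SigmaFinite (μ i)] {f : Fin n → E → ℝ≥0∞}
    (hf : ∀ i, Measurable (f i)) [∀ i, SigmaFinite ((μ i).withDensity (f i))] :
    Measure.pi (fun i => (μ i).withDensity (f i)) =
      (Measure.pi μ).withDensity fun x => ∏ i, f i (x i) := by
  refine Measure.pi_eq fun s hs => ?_
  rw [withDensity_apply _ (MeasurableSet.univ_pi hs), Measure.restrict_pi_pi,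
    lintegral_fin_prod_eq_prod _ hf]
  simp_rw [withDensity_apply _ (hs _)]

lemma prod_gaussianPDF_eq (n : ℕ) (x : Fin n → ℝ) :
    ∏ i, gaussianPDF 0 1 (x i) =
      ENNReal.ofReal ((2 * π) ^ (-(n : ℝ) / 2) * Real.exp (-‖WithLp.toLp 2 x‖ ^ 2 / 2)) := by
  simp_rw [gaussianPDF_def]
  rw [← ENNReal.ofReal_prod_of_nonneg fun i _ => gaussianPDFReal_nonneg _ _ _]
  congr 1
  simp only [gaussianPDFReal, Finset.prod_mul_distrib, ← Real.exp_sum,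
    EuclideanSpace.real_norm_sq_eq]
  congr 1
  · rw [Finset.prod_const, Finset.card_univ, Fintype.card_fin, NNReal.coe_one, mul_one,
      Real.sqrt_eq_rpow, ← Real.rpow_neg (by positivity), ← Real.rpow_natCast,
      ← Real.rpow_mul (by positivity)]
    ring_nf
  · simp [Finset.sum_div, neg_div]

theorem stdGaussian_eq_map_pi (n : ℕ) :
    stdGaussian n = (Measure.pi fun _ : Fin n => gaussianReal 0 1).map (WithLp.toLp 2) := by
  have : SigmaFinite ((volume : Measure ℝ).withDensity (gaussianPDF 0 1)) := by
    rw [← gaussianReal_of_var_ne_zero 0 one_ne_zero]; infer_instance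
  have hLp : Measurable (WithLp.toLp 2 : (Fin n → ℝ) → EuclideanSpace ℝ (Fin n)) := by fun_prop
  ext s hs
  rw [Measure.map_apply hLp hs, gaussianReal_of_var_ne_zero 0 one_ne_zero,
    Measure.pi_withDensity _ fun _ => measurable_gaussianPDF 0 1,
    withDensity_apply _ (hLp hs), stdGaussian, withDensity_apply _ hs,
    ← (PiLp.volume_preserving_toLp (Fin n)).setLIntegral_comp_preimage_emb
      (MeasurableEquiv.toLp 2 (Fin n → ℝ)).measurableEmbedding]
  simp_rw [prod_gaussianPDF_eq]
  rfl

def IsUnconditional {ι : Type*} (s : Set (ι → ℝ)) : Prop :=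
  ∀ x ∈ s, ∀ ε : ι → ℝ, (∀ i, ε i = 1 ∨ ε i = -1) → ε * x ∈ s

section ConsSlice

variable {n : ℕ} {A : Set (Fin (n + 1) → ℝ)}

def consSlice (A : Set (Fin (n + 1) → ℝ)) (t : ℝ) : Set (Fin n → ℝ) := {y | Fin.cons t y ∈ A}

lemma consSlice_eq_preimage (A : Set (Fin (n + 1) → ℝ)) (t : ℝ) :
    consSlice A t =
      Prod.mk t ⁻¹' ((MeasurableEquiv.piFinSuccAbove (fun _ => ℝ) 0).symm ⁻¹' A) := by
  ext y
  simp [consSlice, MeasurableEquiv.piFinSuccAbove_symm_apply, Fin.insertNthEquiv]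

lemma MeasurableSet.consSlice (hA : MeasurableSet A) (t : ℝ) : MeasurableSet (consSlice A t) := by
  rw [consSlice_eq_preimage]
  exact measurable_prodMk_left ((MeasurableEquiv.piFinSuccAbove _ 0).symm.measurable hA)

lemma measurable_measure_consSlice (hA : MeasurableSet A) (ν : Measure (Fin n → ℝ)) [SFinite ν] :
    Measurable fun t => ν (consSlice A t) := by
  simp_rw [consSlice_eq_preimage]
  exact measurable_measure_prodMk_left ((MeasurableEquiv.piFinSuccAbove _ 0).symm.measurable hA)

lemma MeasureTheory.Measure.pi_eq_lintegral_consSlice (μ : Fin (n + 1) → Measure ℝ)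
    [∀ i, SigmaFinite (μ i)] (hA : MeasurableSet A) :
    Measure.pi μ A = ∫⁻ t, Measure.pi (fun i => μ i.succ) (consSlice A t) ∂μ 0 := by
  have e := measurePreserving_piFinSuccAbove μ 0
  rw [← e.symm.measure_preimage hA.nullMeasurableSet]
  simp_rw [Measure.prod_apply (e.symm.measurable hA), ← consSlice_eq_preimage, Fin.zero_succAbove]

lemma Convex.consSlice (hA : Convex ℝ A) (t : ℝ) : Convex ℝ (consSlice A t) := by
  intro x hx y hy a b ha hb hab
  have h : (Fin.cons t (a • x + b • y) : Fin (n + 1) → ℝ) =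
      a • Fin.cons t x + b • Fin.cons t y := by
    ext i; cases i using Fin.cases <;> simp [← add_mul, hab]
  show Fin.cons t _ ∈ A
  rw [h]
  exact hA hx hy ha hb hab

lemma Convex.setOf_cons_mem (hA : Convex ℝ A) (y : Fin n → ℝ) :
    Convex ℝ {t : ℝ | (Fin.cons t y : Fin (n + 1) → ℝ) ∈ A} := by
  intro s hs t ht a b ha hb hab
  have h : (Fin.cons (a • s + b • t) y : Fin (n + 1) → ℝ) =
      a • Fin.cons s y + b • Fin.cons t y := by
    ext i; cases i using Fin.cases <;> simp [← add_mul, hab]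
  show Fin.cons _ y ∈ A
  rw [h]
  exact hA hs ht ha hb hab

lemma IsUnconditional.consSlice (hA : IsUnconditional A) (t : ℝ) :
    IsUnconditional (consSlice A t) := by
  intro y hy ε hε
  have h := hA _ hy (Fin.cons 1 ε) (Fin.cases (Or.inl rfl) hε)
  have e : (Fin.cons 1 ε : Fin (n + 1) → ℝ) * Fin.cons t y = Fin.cons t (ε * y) := by
    ext i; cases i using Fin.cases <;> simp
  rwa [e] at h

lemma IsUnconditional.cons_neg_mem (hA : IsUnconditional A) {t : ℝ} {y : Fin n → ℝ}
    (h : (Fin.cons t y : Fin (n + 1) → ℝ) ∈ A) : (Fin.cons (-t) y : Fin (n + 1) → ℝ) ∈ A := by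
  have h' := hA _ h (Fin.cons (-1) 1) (Fin.cases (Or.inr rfl) fun _ => Or.inl rfl)
  have e : (Fin.cons (-1) 1 : Fin (n + 1) → ℝ) * Fin.cons t y = Fin.cons (-t) y := by
    ext i; cases i using Fin.cases <;> simp
  rwa [e] at h'

lemma consSlice_subset_consSlice_of_abs_le (hA : Convex ℝ A) (hu : IsUnconditional A)
    {s t : ℝ} (h : |t| ≤ |s|) : consSlice A s ⊆ consSlice A t := by
  intro y hy
  have habs : (Fin.cons |s| y : Fin (n + 1) → ℝ) ∈ A := by
    rcases abs_choice s with e | e <;> rw [e]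
    · exact hy
    · exact hu.cons_neg_mem hy
  exact (hA.setOf_cons_mem y).ordConnected.out (hu.cons_neg_mem habs) habs (abs_le.1 h)

end ConsSlice

theorem MeasureTheory.Measure.pi_mul_pi_le_pi_inter {n : ℕ} (μ : Fin n → Measure ℝ)
    [∀ i, IsProbabilityMeasure (μ i)] {A B : Set (Fin n → ℝ)}
    (hA : MeasurableSet A) (hB : MeasurableSet B) (hAc : Convex ℝ A) (hBc : Convex ℝ B)
    (hAu : IsUnconditional A) (hBu : IsUnconditional B) :
    Measure.pi μ A * Measure.pi μ B ≤ Measure.pi μ (A ∩ B) := by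
  induction n with
  | zero =>
    rcases A.eq_empty_or_nonempty with rfl | hA₀
    · simp
    rw [hA₀.eq_univ, Set.univ_inter, measure_univ, one_mul]
  | succ n ih =>
    set ν := Measure.pi fun i : Fin n => μ i.succ
    have hmono : Monovary (fun t => ν (consSlice A t)) (fun t => ν (consSlice B t)) :=
      fun s t hst => measure_mono (consSlice_subset_consSlice_of_abs_le hAc hAu
        (le_of_not_ge fun h =>
          hst.not_ge (measure_mono (consSlice_subset_consSlice_of_abs_le hBc hBu h))))
    calc Measure.pi μ A * Measure.pi μ B
        = (∫⁻ t, ν (consSlice A t) ∂μ 0) * ∫⁻ t, ν (consSlice B t) ∂μ 0 := by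
          rw [Measure.pi_eq_lintegral_consSlice μ hA, Measure.pi_eq_lintegral_consSlice μ hB]
      _ ≤ ∫⁻ t, ν (consSlice A t) * ν (consSlice B t) ∂μ 0 :=
          hmono.lintegral_mul_lintegral_le (measurable_measure_consSlice hA ν)
            (measurable_measure_consSlice hB ν)
      _ ≤ ∫⁻ t, ν (consSlice (A ∩ B) t) ∂μ 0 := lintegral_mono fun t =>
          ih _ (hA.consSlice t) (hB.consSlice t) (hAc.consSlice t) (hBc.consSlice t)
            (hAu.consSlice t) (hBu.consSlice t)
      _ = Measure.pi μ (A ∩ B) := (Measure.pi_eq_lintegral_consSlice μ (hA.inter hB)).symm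

theorem stmt_15_general (n : ℕ) (A B : Set (EuclideanSpace ℝ (Fin n)))
    (hAcl : IsClosed A) (hAco : Convex ℝ A)
    (hBcl : IsClosed B) (hBco : Convex ℝ B)
    (hAunc : ∀ x ∈ A, ∀ ε : Fin n → ℝ, (∀ i, ε i = 1 ∨ ε i = -1) →
      (WithLp.toLp 2 (fun i => ε i * x i)) ∈ A)
    (hBunc : ∀ x ∈ B, ∀ ε : Fin n → ℝ, (∀ i, ε i = 1 ∨ ε i = -1) →
      (WithLp.toLp 2 (fun i => ε i * x i)) ∈ B) :
    stdGaussian n (A ∩ B) ≥ stdGaussian n A * stdGaussian n B := by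
  have hA := hAcl.measurableSet
  have hB := hBcl.measurableSet
  have hLp : Measurable (WithLp.toLp 2 : (Fin n → ℝ) → EuclideanSpace ℝ (Fin n)) := by fun_prop
  rw [ge_iff_le, stdGaussian_eq_map_pi, Measure.map_apply hLp hA, Measure.map_apply hLp hB,
    Measure.map_apply hLp (hA.inter hB), Set.preimage_inter]
  exact Measure.pi_mul_pi_le_pi_inter _ (hLp hA) (hLp hB)
    (fun x hx y hy a b ha hb hab => hAco hx hy ha hb hab)
    (fun x hx y hy a b ha hb hab => hBco hx hy ha hb hab)
    (fun x hx ε hε => hAunc _ hx ε hε) (fun x hx ε hε => hBunc _ hx ε hε)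

theorem stmt_15 (n : ℕ) (A B : Set (EuclideanSpace ℝ (Fin n)))
    (hAcl : IsClosed A) (hAco : Convex ℝ A) (hAsym : ∀ x ∈ A, -x ∈ A)
    (hBcl : IsClosed B) (hBco : Convex ℝ B) (hBsym : ∀ x ∈ B, -x ∈ B)
    (hAunc : ∀ x ∈ A, ∀ ε : Fin n → ℝ, (∀ i, ε i = 1 ∨ ε i = -1) →
      (WithLp.toLp 2 (fun i => ε i * x i)) ∈ A)
    (hBunc : ∀ x ∈ B, ∀ ε : Fin n → ℝ, (∀ i, ε i = 1 ∨ ε i = -1) →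
      (WithLp.toLp 2 (fun i => ε i * x i)) ∈ B) :
    stdGaussian n (A ∩ B) ≥ stdGaussian n A * stdGaussian n B :=
  stmt_15_general n A B hAcl hAco hBcl hBco hAunc hBunc
end
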